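/- arXiv:1111.3975 — 4 statements merged into one kernel-verified Lean document; each statement's English description precedes it below -/
import Mathlib

section
/- The relation < is transitive: if a <_i b and b <_j c for some i, j ∈ I, then a < c (i.e., a <_k c for some k ∈ I). Moreover, in this situation i ≠ j, and if i <_I j then a <_i c, while if j <_I i then a <_j c. -/
open scoped Classical

variable {L ι : Type*}

/-- Δ_{a,b}: indices whose generator is below exactly one of `a`, `b`. -/
def Delta [SemilatticeSup L] (x : ι → L) (a b : L) : Set ι :=
  {j | (x j ≤ a ∧ ¬ x j ≤ b) ∨ (¬ x j ≤ a ∧ x j ≤ b)}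

/-- `a <_i b`: `i` is the minimum of `Δ_{a,b}` and `x i ≤ b`. -/
def LtAt [SemilatticeSup L] [LinearOrder ι] (x : ι → L) (a b : L) (i : ι) : Prop :=
  i ∈ Delta x a b ∧ (∀ j ∈ Delta x a b, i ≤ j) ∧ x i ≤ b

/-- The lectic strict order: `a < b` iff `a <_i b` for some `i`. -/
def LexLt [SemilatticeSup L] [LinearOrder ι] (x : ι → L) (a b : L) : Prop :=
  ∃ i, LtAt x a b i

/-- The (reflexive) lectic order. -/
def LexLe [SemilatticeSup L] [LinearOrder ι] (x : ι → L) (a b : L) : Prop :=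
  a = b ∨ LexLt x a b

/-- `{x i | i}` generates `L`: every element is a join of a nonempty subfamily. -/
def Generates [SemilatticeSup L] (x : ι → L) : Prop :=
  ∀ a : L, ∃ s : Finset ι, ∃ h : s.Nonempty, a = s.sup' h x

/-- `a ⊕ i = (⋁_{j <_I i, x j ≤ a} x j) ∨ x i`. -/
noncomputable def oplus [SemilatticeSup L] [LinearOrder ι] [Fintype ι]
    (x : ι → L) (a : L) (i : ι) : L :=
  (insert i (Finset.univ.filter fun j => j < i ∧ x j ≤ a)).sup'
    (Finset.insert_nonempty _ _) x


section LecticOrder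

variable [SemilatticeSup L] {x : ι → L} {a b c : L}

theorem mem_delta_iff {k : ι} : k ∈ Delta x a b ↔ ¬(x k ≤ a ↔ x k ≤ b) := by
  simp only [Delta, Set.mem_ofPred_eq]
  tauto

variable [LinearOrder ι] {i j : ι}

theorem ltAt_iff :
    LtAt x a b i ↔ ¬x i ≤ a ∧ x i ≤ b ∧ ∀ k < i, (x k ≤ a ↔ x k ≤ b) := by
  simp only [LtAt, mem_delta_iff]
  constructor
  · rintro ⟨hdiff, hmin, hib⟩
    exact ⟨fun hia => hdiff (iff_of_true hia hib), hib,
      fun k hk => not_not.mp fun hk' => (hmin k hk').not_gt hk⟩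
  · rintro ⟨hia, hib, hagree⟩
    exact ⟨fun h => hia (h.mpr hib), fun k hk => not_lt.mp fun hki => hk (hagree k hki), hib⟩

theorem LtAt.ne (hab : LtAt x a b i) (hbc : LtAt x b c j) : i ≠ j := by
  rintro rfl
  exact (ltAt_iff.mp hbc).1 (ltAt_iff.mp hab).2.1

theorem LtAt.trans_of_lt (hab : LtAt x a b i) (hbc : LtAt x b c j) (hij : i < j) :
    LtAt x a c i := by
  obtain ⟨hia, hib, hab⟩ := ltAt_iff.mp hab
  obtain ⟨-, -, hbc⟩ := ltAt_iff.mp hbc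
  exact ltAt_iff.mpr ⟨hia, (hbc i hij).mp hib,
    fun k hki => (hab k hki).trans (hbc k (hki.trans hij))⟩

theorem LtAt.trans_of_gt (hab : LtAt x a b i) (hbc : LtAt x b c j) (hji : j < i) :
    LtAt x a c j := by
  obtain ⟨-, -, hab⟩ := ltAt_iff.mp hab
  obtain ⟨hjb, hjc, hbc⟩ := ltAt_iff.mp hbc
  exact ltAt_iff.mpr ⟨fun hja => hjb ((hab j hji).mp hja), hjc,
    fun k hkj => (hab k (hkj.trans hji)).trans (hbc k hkj)⟩

end LecticOrder

theorem lexLt_trans_general [SemilatticeSup L] [LinearOrder ι]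
    (x : ι → L) (a b c : L) (i j : ι)
    (hab : LtAt x a b i) (hbc : LtAt x b c j) :
    (∃ k, LtAt x a c k) ∧ i ≠ j ∧
      (i < j → LtAt x a c i) ∧ (j < i → LtAt x a c j) := by
  have hij := hab.ne hbc
  refine ⟨?_, hij, hab.trans_of_lt hbc, hab.trans_of_gt hbc⟩
  rcases hij.lt_or_gt with h | h
  · exact ⟨i, hab.trans_of_lt hbc h⟩
  · exact ⟨j, hab.trans_of_gt hbc h⟩

theorem lexLt_trans [SemilatticeSup L] [LinearOrder ι] [Fintype ι]
    (x : ι → L) (hgen : Generates x) (a b c : L) (i j : ι)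
    (hab : LtAt x a b i) (hbc : LtAt x b c j) :
    (∃ k, LtAt x a c k) ∧ i ≠ j ∧
      (i < j → LtAt x a c i) ∧ (j < i → LtAt x a c j) :=
  lexLt_trans_general x a b c i j hab hbc
end

section
/- The relation < is total on distinct elements: for all a, b ∈ L with a ≠ b, either a < b or b < a (and not both). -/
open scoped Classical

variable {L ι : Type*}

/-!
Both `a <_i b` and `b <_j a` say that the index is the least element of `Δ_{a,b} = Δ_{b,a}`, so
`i = j`, and then `x i` would lie below both `a` and `b`. Conversely the least element `m` of
`Δ_{a,b}` (nonempty because the generators separate distinct elements, and finite) witnesses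
`a <_m b` or `b <_m a` according to which of `a`, `b` lies above `x m`.
-/

section Lectic

variable [SemilatticeSup L] {x : ι → L} {a b : L}

lemma delta_comm (x : ι → L) (a b : L) : Delta x a b = Delta x b a := by
  ext j
  simp only [Delta, Set.mem_ofPred_eq]
  tauto

lemma Generates.delta_nonempty (hgen : Generates x) (hne : a ≠ b) :
    (Delta x a b).Nonempty := by
  by_contra hempty
  have hsame : ∀ j, x j ≤ a ↔ x j ≤ b := fun j => by
    by_contra hj
    exact hempty ⟨j, by simp only [Delta, Set.mem_ofPred_eq]; tauto⟩
  have hle : ∀ {c d : L}, (∀ j, x j ≤ c → x j ≤ d) → c ≤ d := fun {c d} hcd => by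
    obtain ⟨s, hs, rfl⟩ := hgen c
    exact Finset.sup'_le _ _ fun j hj => hcd j (Finset.le_sup' x hj)
  exact hne (le_antisymm (hle fun j => (hsame j).mp) (hle fun j => (hsame j).mpr))

variable [LinearOrder ι] {i : ι}

lemma ltAt_iff_isLeast : LtAt x a b i ↔ IsLeast (Delta x a b) i ∧ x i ≤ b :=
  and_assoc.symm

lemma ltAt_or_ltAt_of_isLeast (h : IsLeast (Delta x a b) i) : LtAt x a b i ∨ LtAt x b a i := by
  simp only [ltAt_iff_isLeast, ← delta_comm x a b, h, true_and]
  rcases h.1 with ⟨hia, -⟩ | ⟨-, hib⟩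
  · exact Or.inr hia
  · exact Or.inl hib

lemma LexLt.not_lexLt (hab : LexLt x a b) : ¬ LexLt x b a := by
  rintro ⟨j, hj⟩
  obtain ⟨i, hi⟩ := hab
  rw [ltAt_iff_isLeast, ← delta_comm] at hj
  rw [ltAt_iff_isLeast] at hi
  obtain rfl : i = j := hi.1.unique hj.1
  rcases hi.1.1 with ⟨-, hib⟩ | ⟨hia, -⟩
  exacts [hib hi.2, hia hj.2]

lemma Generates.lexLt_or_lexLt [Finite ι] (hgen : Generates x) (hne : a ≠ b) :
    LexLt x a b ∨ LexLt x b a := by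
  obtain ⟨i, hi, hmin⟩ :=
    Set.exists_min_image (Delta x a b) id (Set.toFinite _) (hgen.delta_nonempty hne)
  exact (ltAt_or_ltAt_of_isLeast ⟨hi, hmin⟩).imp (⟨i, ·⟩) (⟨i, ·⟩)

end Lectic

theorem lexLt_total [SemilatticeSup L] [LinearOrder ι] [Fintype ι]
    (x : ι → L) (hgen : Generates x) (a b : L) (hne : a ≠ b) :
    Xor' (LexLt x a b) (LexLt x b a) :=
  (xor_iff_or_and_not_and _ _).mpr
    ⟨hgen.lexLt_or_lexLt hne, fun ⟨hab, hba⟩ => hab.not_lexLt hba⟩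
end

section
/- If x_i ≰_L a, then a < a ⊕ i, where a ⊕ i := (⋁_{j <_I i, x_j ≤_L a} x_j) ∨ x_i. -/
open scoped Classical

variable {L ι : Type*}

/-! The only index of `Δ_{a, a ⊕ i}` that could witness the wrong direction is some `j < i`
with `x j ≤ a`; but every such `x j` is a joinand of `a ⊕ i`. So the least element `m` of
`Δ_{a, a ⊕ i}`, which exists because `i` lies in it, satisfies `x m ≤ a ⊕ i`. -/

section

variable [SemilatticeSup L] [LinearOrder ι]

theorem exists_isLeast_delta [WellFoundedLT ι] {x : ι → L} {a b : L}
    (h : (Delta x a b).Nonempty) : ∃ m, IsLeast (Delta x a b) m := by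
  obtain ⟨m, hm, hmin⟩ := wellFounded_lt.has_min _ h
  exact ⟨m, hm, fun j hj => not_lt.mp (hmin j hj)⟩

theorem lexLt_of_forall_lt [WellFoundedLT ι] {x : ι → L} {a b : L} {i : ι}
    (hia : ¬ x i ≤ a) (hib : x i ≤ b) (hlt : ∀ j < i, x j ≤ a → x j ≤ b) : LexLt x a b := by
  have hi : i ∈ Delta x a b := Or.inr ⟨hia, hib⟩
  obtain ⟨m, hm, hmin⟩ := exists_isLeast_delta ⟨i, hi⟩
  refine ⟨m, hm, hmin, ?_⟩
  rcases hm with ⟨hma, hmb⟩ | ⟨-, hmb⟩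
  · have hmi : m < i := (hmin hi).lt_of_ne fun h => hia (h ▸ hma)
    exact absurd (hlt m hmi hma) hmb
  · exact hmb

variable [Fintype ι]

theorem le_oplus_self (x : ι → L) (a : L) (i : ι) : x i ≤ oplus x a i :=
  Finset.le_sup' x (Finset.mem_insert_self _ _)

theorem le_oplus_of_lt {x : ι → L} {a : L} {i j : ι} (hji : j < i) (hja : x j ≤ a) :
    x j ≤ oplus x a i :=
  Finset.le_sup' x (Finset.mem_insert_of_mem (by simp [hji, hja]))

end

theorem lt_oplus_general [SemilatticeSup L] [LinearOrder ι] [Fintype ι]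
    (x : ι → L) (a : L) (i : ι) (hi : ¬ x i ≤ a) :
    LexLt x a (oplus x a i) :=
  lexLt_of_forall_lt hi (le_oplus_self x a i) fun _ hji hja => le_oplus_of_lt hji hja

theorem lt_oplus [SemilatticeSup L] [LinearOrder ι] [Fintype ι]
    (x : ι → L) (hgen : Generates x) (a : L) (i : ι) (hi : ¬ x i ≤ a) :
    LexLt x a (oplus x a i) :=
  lt_oplus_general x a i hi
end

section
/- If a <_i b, then a ⊕ i ≤ b (in the lectic order), where a ⊕ i := (⋁_{j <_I i, x_j ≤_L a} x_j) ∨ x_i. -/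
/-!
Every generator below `a ⊕ i` is below `b`: `x i` is by assumption, and a generator `x j ≤ a`
with `j <_I i` lies below `b` because `i` is the least index of `Δ_{a,b}`. So `a ⊕ i ≤ b` in `L`,
and since `L` is generated by the `x j`, the order of `L` refines the lectic order: if `c < b`,
some generator is below `b` but not below `c`, and the least index of `Δ_{c,b}` is necessarily
of that kind, so it witnesses `c < b` lectically.
-/

open scoped Classical

variable {L ι : Type*}

section

variable [SemilatticeSup L]

namespace Generates

variable {x : ι → L}

theorem le_of_forall_le (hgen : Generates x) {a b : L} (h : ∀ j, x j ≤ a → x j ≤ b) :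
    a ≤ b := by
  obtain ⟨s, hs, rfl⟩ := hgen a
  exact Finset.sup'_le hs x fun j hj => h j (Finset.le_sup' x hj)

theorem exists_le_not_le_of_lt (hgen : Generates x) {a b : L} (hab : a < b) :
    ∃ j, x j ≤ b ∧ ¬ x j ≤ a := by
  by_contra! h
  exact hab.not_ge (hgen.le_of_forall_le h)

theorem lexLt_of_lt [LinearOrder ι] [Finite ι] (hgen : Generates x) {a b : L} (hab : a < b) :
    LexLt x a b := by
  obtain ⟨j, hjb, hja⟩ := hgen.exists_le_not_le_of_lt hab
  obtain ⟨k, hk, hmin⟩ :=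
    wellFounded_lt.has_min (Delta x a b) ⟨j, Or.inr ⟨hja, hjb⟩⟩
  refine ⟨k, hk, fun l hl => not_lt.mp (hmin l hl), ?_⟩
  rcases hk with ⟨hka, hkb⟩ | ⟨-, hkb⟩
  · exact absurd (hka.trans hab.le) hkb
  · exact hkb

theorem lexLe_of_le [LinearOrder ι] [Finite ι] (hgen : Generates x) {a b : L} (hab : a ≤ b) :
    LexLe x a b :=
  hab.eq_or_lt.imp id hgen.lexLt_of_lt

end Generates

theorem oplus_le_of_ltAt [LinearOrder ι] [Fintype ι] {x : ι → L} {a b : L} {i : ι}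
    (hab : LtAt x a b i) : oplus x a i ≤ b := by
  obtain ⟨-, hmin, hib⟩ := hab
  refine Finset.sup'_le _ x fun j hj => ?_
  rcases Finset.mem_insert.mp hj with rfl | hj
  · exact hib
  · obtain ⟨hji, hja⟩ := (Finset.mem_filter.mp hj).2
    by_contra hjb
    exact (hmin j (Or.inl ⟨hja, hjb⟩)).not_gt hji

end

theorem oplus_le [SemilatticeSup L] [LinearOrder ι] [Fintype ι]
    (x : ι → L) (hgen : Generates x) (a b : L) (i : ι)
    (hab : LtAt x a b i) :
    LexLe x (oplus x a i) b :=
  hgen.lexLe_of_le (oplus_le_of_ltAt hab)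
end
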